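/- arXiv:2205.03588 — 5 statements merged into one kernel-verified Lean document; each statement's English description precedes it below -/
import Mathlib

section
/- Let F₁ : ℝⁿ → ℝⁿ be the translation x ↦ x + ρ₁ and F₂ : ℝᵐ → ℝᵐ the translation x ↦ x + ρ₂. Suppose F : ℝⁿ → ℝᵐ is a continuous map such that F(x + k) − F(x) = A·k for all x ∈ ℝⁿ and k ∈ ℤⁿ, where A is an m×n integer matrix, and suppose there exists l ∈ ℤᵐ with F₂ ∘ F = F ∘ F₁ + l. Then ρ₂ = A·ρ₁ + l; in particular ρ₂ ≡ A·ρ₁ (mod ℤᵐ). -/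
/-- Lift-level semi-conjugacy rigidity: if `F : ℝⁿ → ℝᵐ` is continuous, satisfies
`F (x + k) - F x = A k` for all integer vectors `k` (where `A` is an integer matrix),
and intertwines the translations by `ρ₁` and `ρ₂` up to the integer vector `l`
(`F₂ ∘ F = F ∘ F₁ + l`), then `ρ₂ = A ρ₁ + l`. -/
theorem rotation_vector_of_semiconjugacy
    (n m : ℕ) (ρ₁ : Fin n → ℝ) (ρ₂ : Fin m → ℝ)
    (A : Matrix (Fin m) (Fin n) ℤ) (l : Fin m → ℤ)
    (F : (Fin n → ℝ) → (Fin m → ℝ)) (hF : Continuous F)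
    (hper : ∀ (x : Fin n → ℝ) (k : Fin n → ℤ),
      F (x + fun i => (k i : ℝ)) - F x
        = (A.map (Int.cast : ℤ → ℝ)).mulVec (fun i => (k i : ℝ)))
    (hsemi : ∀ x : Fin n → ℝ, F x + ρ₂ = F (x + ρ₁) + fun i => (l i : ℝ)) :
    ρ₂ = (A.map (Int.cast : ℤ → ℝ)).mulVec ρ₁ + fun i => (l i : ℝ) := by
  set A' := A.map (Int.cast : ℤ → ℝ) with hA'
  set lR : Fin m → ℝ := fun i => (l i : ℝ) with hlR
  -- iterate the semiconjugacy
  have hiter : ∀ N : ℕ, F ((N : ℝ) • ρ₁) = F 0 + (N : ℝ) • (ρ₂ - lR) := by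
    intro N
    induction N with
    | zero => simp
    | succ N ih =>
      have h1 : ((N + 1 : ℕ) : ℝ) • ρ₁ = (N : ℝ) • ρ₁ + ρ₁ := by
        push_cast; rw [add_smul, one_smul]
      have h2 := hsemi ((N : ℝ) • ρ₁)
      have h3 : F ((N : ℝ) • ρ₁ + ρ₁) = F ((N : ℝ) • ρ₁) + ρ₂ - lR := by
        rw [eq_sub_iff_add_eq]; exact h2.symm
      rw [h1, h3, ih]
      push_cast
      rw [add_smul, one_smul]
      abel
  -- the periodized map g is bounded on [0,1]^n
  have hA'cont : Continuous fun y : Fin n → ℝ => A'.mulVec y :=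
    (Matrix.mulVecLin A').continuous_of_finiteDimensional
  set g : (Fin n → ℝ) → (Fin m → ℝ) := fun y => F y - F 0 - A'.mulVec y with hg
  have hgcont : Continuous g := by
    apply Continuous.sub (Continuous.sub hF continuous_const) hA'cont
  obtain ⟨C, hC⟩ := (isCompact_Icc (a := (0 : Fin n → ℝ)) (b := 1)).exists_bound_of_continuousOn
    hgcont.continuousOn
  set c : Fin m → ℝ := ρ₂ - lR - A'.mulVec ρ₁ with hc
  have key : ∀ N : ℕ, (N : ℝ) • c = g (fun i => Int.fract ((N : ℝ) * ρ₁ i)) := by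
    intro N
    set t : Fin n → ℝ := fun i => Int.fract ((N : ℝ) * ρ₁ i) with ht
    set k : Fin n → ℤ := fun i => ⌊(N : ℝ) * ρ₁ i⌋ with hk
    have hsum : t + (fun i => (k i : ℝ)) = (N : ℝ) • ρ₁ := by
      funext i
      simp only [Pi.add_apply, Pi.smul_apply, smul_eq_mul, ht, hk]
      exact Int.fract_add_floor _
    have hp := hper t k
    rw [hsum, hiter N] at hp
    -- hp : F 0 + N • (ρ₂ - lR) - F t = A'.mulVec k
    have hk' : (fun i => (k i : ℝ)) = (N : ℝ) • ρ₁ - t := by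
      rw [← hsum]; abel
    rw [hk', Matrix.mulVec_sub, Matrix.mulVec_smul] at hp
    have : F t = F 0 + (N : ℝ) • (ρ₂ - lR) - ((N : ℝ) • A'.mulVec ρ₁ - A'.mulVec t) := by
      rw [← hp]; abel
    simp only [hg, this, hc]
    rw [smul_sub, smul_sub]
    abel
  have hbound : ∀ N : ℕ, (N : ℝ) * ‖c‖ ≤ C := by
    intro N
    have ht : (fun i => Int.fract ((N : ℝ) * ρ₁ i)) ∈ Set.Icc (0 : Fin n → ℝ) 1 := by
      constructor <;> intro i
      · exact Int.fract_nonneg _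
      · exact le_of_lt (Int.fract_lt_one _)
    have := hC _ ht
    rw [← key N] at this
    calc (N : ℝ) * ‖c‖ = ‖(N : ℝ) • c‖ := by
          simp [norm_smul]
      _ ≤ C := this
  have hczero : c = 0 := by
    by_contra h
    have hpos : 0 < ‖c‖ := norm_pos_iff.mpr h
    obtain ⟨N, hN⟩ := exists_nat_gt (C / ‖c‖)
    have := hbound N
    have : (N : ℝ) ≤ C / ‖c‖ := (le_div_iff₀ hpos).mpr this
    linarith
  have : ρ₂ - lR - A'.mulVec ρ₁ = 0 := hczero
  funext i
  have := congrFun this i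
  simp only [Pi.sub_apply, Pi.zero_apply, Pi.add_apply] at this ⊢
  simp only [hlR] at this
  linarith
end

section
/- Let α₁, ..., αₙ be real numbers with dim_ℚ span_ℚ{α₁, ..., αₙ} = m. Then there exists a matrix G ∈ GL_n(ℤ) and real numbers β₁, ..., βₘ such that G·(α₁, ..., αₙ)ᵀ = (β₁, ..., βₘ, 0, ..., 0)ᵀ. -/
/-!
Let `F : ℤⁿ → ℝ` be `v ↦ ∑ vᵢ αᵢ`. Its image lies in `span_ℚ {αᵢ}`, so it has rank at most `m`,
and by rank–nullity its kernel `K` has rank at least `n - m`. Since `ℤⁿ ⧸ K` embeds in the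
torsion-free group `ℝ`, the Smith normal form of `K ⊆ ℤⁿ` yields a basis of `ℤⁿ` of which
`rank K` vectors lie in `K`. Ordering this basis so that those vectors come last and taking it
as the rows of `G` gives the required unimodular matrix.
-/

open Module Submodule Finset

theorem Equiv.Perm.exists_mapsTo_of_card_le {ι : Type*} [Fintype ι] [DecidableEq ι]
    {s t : Finset ι} (h : #s ≤ #t) : ∃ σ : Perm ι, ∀ i ∈ s, σ i ∈ t := by
  obtain ⟨t', ht't, hcard⟩ := exists_subset_card_eq h
  let e : s ≃ t' := Fintype.equivOfCardEq (by simp [hcard])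
  exact ⟨e.extendSubtype, fun i hi => ht't (e.extendSubtype_mem i hi)⟩

theorem Fin.card_filter_le_val {n : ℕ} (m : ℕ) : #{i : Fin n | m ≤ (i : ℕ)} = n - m := by
  simp_rw [← not_lt]
  rw [filter_not, card_sdiff_of_subset (filter_subset _ _), card_univ, Fintype.card_fin,
    Fin.card_filter_val_lt]
  omega

section FractionRing

variable (R K : Type*) {V : Type*} [CommRing R] [Field K] [Algebra R K]
  [IsFractionRing R K] [AddCommGroup V] [Module K V] [Module R V] [IsScalarTower R K V]

theorem Submodule.finrank_le_finrank_of_le_restrictScalars {F : Submodule R V}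
    {N : Submodule K V} [Module.Finite K N] (hle : F ≤ N.restrictScalars R) :
    finrank R F ≤ finrank K N := by
  have hrank : Module.rank R (N.restrictScalars R) = Module.rank K N :=
    (IsFractionRing.rank_right_eq R K N).symm
  calc finrank R F ≤ finrank R (N.restrictScalars R) :=
        finrank_le_finrank_of_rank_le_rank (by simpa using rank_mono hle)
          (hrank ▸ rank_lt_aleph0 K N)
    _ = finrank K N := congrArg Cardinal.toNat hrank

theorem card_sub_finrank_span_le_finrank_ker_linearCombination [IsDomain R] {ι : Type*}
    [Fintype ι] (α : ι → V) :
    Fintype.card ι - finrank K (span K (Set.range α)) ≤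
      finrank R (LinearMap.ker (Fintype.linearCombination R α)) := by
  set F := Fintype.linearCombination R α
  have : Module.Finite K (span K (Set.range α)) := .span_of_finite K (Set.finite_range α)
  have hrange : finrank R (LinearMap.range F) ≤ finrank K (span K (Set.range α)) :=
    finrank_le_finrank_of_le_restrictScalars R K <|
      Fintype.range_linearCombination R α ▸ span_le_restrictScalars R K _
  have hnullity :
      finrank R (LinearMap.range F) + finrank R (LinearMap.ker F) = Fintype.card ι := by
    rw [← F.quotKerEquivRange.finrank_eq, finrank_quotient_add_finrank,
      finrank_fintype_fun_eq_card]
  omega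

end FractionRing

theorem LinearMap.exists_basis_card_eq_finrank_ker {R M P ι : Type*} [CommRing R] [IsDomain R]
    [IsPrincipalIdealRing R] [AddCommGroup M] [Module R M] [AddCommGroup P] [Module R P]
    [IsTorsionFree R P] [Fintype ι] (b : Basis ι R M) (F : M →ₗ[R] P) :
    ∃ (b' : Basis ι R M) (s : Finset ι), #s = finrank R (ker F) ∧ ∀ i ∈ s, F (b' i) = 0 := by
  obtain ⟨r, snf⟩ := (ker F).smithNormalForm b
  refine ⟨snf.bM, univ.map snf.f, by simp [finrank_eq_card_basis snf.bN], ?_⟩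
  simp only [mem_map, mem_univ, true_and, forall_exists_index, forall_apply_eq_imp_iff]
  intro k
  have ha : snf.a k ≠ 0 := by
    rintro h
    exact snf.bN.ne_zero k (Subtype.ext (by rw [snf.snf k, h, zero_smul]; rfl))
  have hker : F (snf.a k • snf.bM (snf.f k)) = 0 := snf.snf k ▸ (snf.bN k).2
  rw [map_smul, smul_eq_zero] at hker
  exact hker.resolve_left ha

/-- A tuple of real numbers of `ℚ`-rank `m` can be transformed by a unimodular integer
matrix into a tuple whose last `n - m` entries vanish. -/
theorem unimodular_reduction_of_rank
    (n m : ℕ) (α : Fin n → ℝ)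
    (hrank : Module.finrank ℚ ↥(Submodule.span ℚ (Set.range α)) = m) :
    ∃ G : Matrix (Fin n) (Fin n) ℤ, IsUnit G.det ∧
      ∀ i : Fin n, m ≤ (i : ℕ) → (G.map (Int.cast : ℤ → ℝ)).mulVec α i = 0 := by
  obtain ⟨b, s, hs, hb⟩ :=
    (Fintype.linearCombination ℤ α).exists_basis_card_eq_finrank_ker (Pi.basisFun ℤ (Fin n))
  have hcard : #{i : Fin n | m ≤ (i : ℕ)} ≤ #s := by
    simpa only [Fin.card_filter_le_val, hs, ← hrank, Fintype.card_fin] using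
      card_sub_finrank_span_le_finrank_ker_linearCombination ℤ ℚ α
  obtain ⟨σ, hσ⟩ := Equiv.Perm.exists_mapsTo_of_card_le hcard
  refine ⟨Matrix.of fun i => b (σ i), ?_, fun i hi => ?_⟩
  · rw [← Pi.basisFun_det_apply]
    simpa [Function.comp_def] using (Pi.basisFun ℤ (Fin n)).isUnit_det (b.reindex σ.symm)
  · simpa [Matrix.mulVec, dotProduct, Fintype.linearCombination_apply] using
      hb _ (hσ i (by simpa using hi))
end

section
/- Let α₁, ..., αₙ ∈ ℝ with reductive rank 𝓡̃(α₁, ..., αₙ) = m − 1 and rank 𝓡(α₁, ..., αₙ) = m. Then there exist G ∈ GL_n(ℤ), real numbers γ₁, ..., γ_{m−1} that are rationally independent irrational numbers (i.e., 1, γ₁, ..., γ_{m−1} are ℚ-linearly independent), integers k, d with gcd(d, k) = 1, and integers N₁, ..., Nₙ such that G·(α₁, ..., αₙ)ᵀ ≡ (γ₁, ..., γ_{m−1}, k/d, 0, ..., 0)ᵀ (mod ℤⁿ). -/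
/-!
Let `φ : ℤⁿ → ℝ` be `c ↦ ∑ cᵢ αᵢ` and `L ⊆ ℤⁿ` the lattice of those `c` with `φ c ∈ ℚ`. Since
`ℤⁿ ⧸ L` embeds into the torsion-free group `ℝ ⧸ ℚ`, every basis of `L` extends to a basis of
`ℤⁿ`, and `φ` maps the added vectors to reals that are `ℚ`-independent modulo `ℚ`; they span the
same `ℚ`-space modulo `ℚ` as the `αᵢ`, so there are exactly `m - 1` of them. On `L`, `φ` takes
values in the rank-one group `ℚ`, so `L` has a basis on which `φ` vanishes except at the first
vector. Taking the combined basis as the rows of `G`, the vector `Gα` is exactly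
`(γ₁, …, γ_{m-1}, k/d, 0, …, 0)`.
-/

open Module Submodule LinearMap

theorem LinearIndependent.finCons_of_mkQ {K V : Type*} [DivisionRing K] [AddCommGroup V]
    [Module K V] {x : V} (hx : x ≠ 0) {n : ℕ} {γ : Fin n → V}
    (h : LinearIndependent K ((K ∙ x).mkQ ∘ γ)) :
    LinearIndependent K (Fin.cons x γ : Fin (n + 1) → V) := by
  refine linearIndependent_finCons.2 ⟨h.of_comp _, fun hmem => hx ?_⟩
  obtain ⟨c, hc⟩ := (mem_span_range_iff_exists_fun K).1 hmem
  have hc_mkQ : ∑ i, c i • ((K ∙ x).mkQ ∘ γ) i = 0 := by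
    have hx_mkQ : (K ∙ x).mkQ (∑ i, c i • γ i) = 0 := by
      rw [hc]; exact (Quotient.mk_eq_zero _).2 (mem_span_singleton_self x)
    simpa only [map_sum, map_smul, Function.comp_apply] using hx_mkQ
  simp [← hc, Fintype.linearIndependent_iff.1 h c hc_mkQ]

theorem Module.Basis.isUnit_det_of_rows {R ι : Type*} [CommRing R] [Fintype ι] [DecidableEq ι]
    (B : Basis ι R (ι → R)) : IsUnit (Matrix.of fun i j => B i j).det := by
  have : Matrix.of (fun i j => B i j) = ((Pi.basisFun R ι).toMatrix B).transpose := by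
    ext; simp [Basis.toMatrix_apply]
  rw [this, Matrix.det_transpose, ← Basis.det_apply]
  exact (Pi.basisFun R ι).isUnit_det B

section FractionField

variable {R K M V : Type*} [CommRing R] [IsDomain R] [IsPrincipalIdealRing R] [Field K]
  [Algebra R K] [IsFractionRing R K] [AddCommGroup M] [Module R M] [Module.Finite R M]
  [AddCommGroup V] [Module K V] [Module R V] [IsScalarTower R K V]

variable (K) in
theorem LinearMap.exists_basis_sum_extending_basis_ker (f : M →ₗ[R] V) {κ : Type*}
    (bK : Basis κ R (ker f)) :
    ∃ (t : ℕ) (b : Basis (Fin t ⊕ κ) R M), (∀ k, b (.inr k) = bK k) ∧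
      LinearIndependent K (f ∘ b ∘ .inl) ∧
      span K (Set.range (f ∘ b ∘ .inl)) = span K (range f : Set V) := by
  have : IsTorsionFree R V := .trans_faithfulSMul R K V
  set bQ := finBasis R (range f)
  let b := (bK.sumQuot (bQ.map f.quotKerEquivRange.symm)).reindex (Equiv.sumComm _ _)
  have hcomp : f ∘ b ∘ .inl = (range f).subtype ∘ bQ := by
    ext i
    simp only [b, Function.comp_apply, Basis.reindex_apply, Equiv.sumComm_symm,
      Equiv.sumComm_apply, Sum.swap_inl]
    rw [← f.quotKerEquivRange_apply_mk, bK.sumQuot_inr, Basis.map_apply,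
      LinearEquiv.apply_symm_apply, subtype_apply]
  refine ⟨_, b, fun k => by simp [b], ?_, ?_⟩
  · rw [hcomp, ← LinearIndependent.iff_fractionRing R K]
    exact bQ.linearIndependent.map' _ (ker_subtype _)
  · rw [hcomp, Set.range_comp, ← span_span_of_tower R K, ← Submodule.map_span, bQ.span_eq,
      map_subtype_top]

variable (K) in
theorem LinearMap.exists_finBasis_apply_eq_ite_of_mem_span_singleton [Module.Free R M]
    (f : M →ₗ[R] V) {v : V} (hf : ∀ x, f x ∈ K ∙ v) :
    ∃ (r : ℕ) (w : Basis (Fin r) R M) (c : K), ∀ j, f (w j) = if (j : ℕ) = 0 then c • v else 0 := by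
  obtain ⟨t, b, hb_inr, hind, -⟩ := f.exists_basis_sum_extending_basis_ker K (finBasis R (ker f))
  have ht : t ≤ 1 := by
    calc t = finrank K (span K (Set.range (f ∘ b ∘ .inl))) := by simp [finrank_span_eq_card hind]
      _ ≤ finrank K (K ∙ v) := finrank_mono (span_le.2 (Set.range_subset_iff.2 fun _ => hf _))
      _ ≤ 1 := by simpa using finrank_span_le_card (R := K) {v}
  obtain ⟨r, w, hw⟩ :
      ∃ (r : ℕ) (w : Basis (Fin r) R M), ∀ j : Fin r, (j : ℕ) ≠ 0 → f (w j) = 0 := by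
    refine ⟨_, b.reindex finSumFinEquiv, fun j => ?_⟩
    induction j using Fin.addCases with
    | left i => intro hi; simp only [Fin.val_castAdd, ne_eq] at hi; omega
    | right k => intro _; simp [hb_inr]
  cases r with
  | zero => exact ⟨0, w, 0, fun j => j.elim0⟩
  | succ r =>
    obtain ⟨c, hc⟩ := mem_span_singleton.1 (hf (w 0))
    refine ⟨r + 1, w, c, fun j => ?_⟩
    split_ifs with hj
    · rw [hc, show j = 0 from Fin.ext hj]
    · exact hw j hj

end FractionField

theorem unimodular_normal_form_of_reductive_rank_general
    (n m : ℕ) (α : Fin n → ℝ)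
    (hred : Module.finrank ℚ ↥(Submodule.span ℚ
        ((Submodule.span ℚ ({1} : Set ℝ)).mkQ '' Set.range α)) = m - 1) :
    ∃ G : Matrix (Fin n) (Fin n) ℤ, IsUnit G.det ∧
    ∃ γ : Fin (m - 1) → ℝ,
      LinearIndependent ℚ (Fin.cons (1 : ℝ) γ : Fin (m - 1 + 1) → ℝ) ∧
    ∃ k d : ℤ, Int.gcd d k = 1 ∧
    ∃ N : Fin n → ℤ,
      ∀ i : Fin n, (G.map (Int.cast : ℤ → ℝ)).mulVec α i
        = (if h : (i : ℕ) < m - 1 then γ ⟨i, h⟩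
           else if (i : ℕ) = m - 1 then (k : ℝ) / (d : ℝ) else 0) + N i := by
  set π := (ℚ ∙ (1 : ℝ)).mkQ
  set φ := Fintype.linearCombination ℤ α
  set ρ := (π.restrictScalars ℤ) ∘ₗ φ
  have hφ_ker : ∀ x : ker ρ, φ x ∈ ℚ ∙ (1 : ℝ) := fun x => (Quotient.mk_eq_zero _).1 x.2
  obtain ⟨r, w, q, hw⟩ :=
    (φ ∘ₗ (ker ρ).subtype).exists_finBasis_apply_eq_ite_of_mem_span_singleton ℚ hφ_ker
  obtain ⟨t, b, hb_inr, hind, hspan⟩ := ρ.exists_basis_sum_extending_basis_ker ℚ w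
  have hspan_ρ : span ℚ (range ρ : Set _) = span ℚ (π '' Set.range α) := by
    rw [range_comp, Fintype.range_linearCombination, Submodule.map_span]
    exact span_span_of_tower ℤ ℚ (π '' Set.range α)
  have ht : t = m - 1 := by
    rw [← hred, ← hspan_ρ, ← hspan, finrank_span_eq_card hind, Fintype.card_fin]
  subst ht
  have hn : n = m - 1 + r := by simpa using finrank_eq_card_basis b
  subst hn
  set B := b.reindex finSumFinEquiv
  refine ⟨Matrix.of fun i j => B i j, B.isUnit_det_of_rows, fun i => φ (b (.inl i)),
    .finCons_of_mkQ one_ne_zero hind, q.num, q.den, ?_, 0, fun i => ?_⟩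
  · exact q.reduced.symm
  have hGα : ((Matrix.of fun i j => B i j).map (Int.cast : ℤ → ℝ)).mulVec α i = φ (B i) := by
    simp [Matrix.mulVec, dotProduct, φ, Fintype.linearCombination_apply, zsmul_eq_mul]
  rw [hGα, Pi.zero_apply, Int.cast_zero, add_zero]
  induction i using Fin.addCases with
  | left i => simp [B]
  | right j => simpa [B, hb_inr, Rat.cast_def] using hw j

/-- If `α₁, …, αₙ` have rank `m` and reductive rank `m - 1`, then some unimodular integer
matrix transforms them, mod `ℤⁿ`, into `(γ₁, …, γ_{m-1}, k/d, 0, …, 0)` where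
`1, γ₁, …, γ_{m-1}` are `ℚ`-linearly independent and `gcd (d, k) = 1`. -/
theorem unimodular_normal_form_of_reductive_rank
    (n m : ℕ) (α : Fin n → ℝ)
    (hrank : Module.finrank ℚ ↥(Submodule.span ℚ (Set.range α)) = m)
    (hred : Module.finrank ℚ ↥(Submodule.span ℚ
        ((Submodule.span ℚ ({1} : Set ℝ)).mkQ '' Set.range α)) = m - 1) :
    ∃ G : Matrix (Fin n) (Fin n) ℤ, IsUnit G.det ∧
    ∃ γ : Fin (m - 1) → ℝ,
      LinearIndependent ℚ (Fin.cons (1 : ℝ) γ : Fin (m - 1 + 1) → ℝ) ∧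
    ∃ k d : ℤ, Int.gcd d k = 1 ∧
    ∃ N : Fin n → ℤ,
      ∀ i : Fin n, (G.map (Int.cast : ℤ → ℝ)).mulVec α i
        = (if h : (i : ℕ) < m - 1 then γ ⟨i, h⟩
           else if (i : ℕ) = m - 1 then (k : ℝ) / (d : ℝ) else 0) + N i :=
  unimodular_normal_form_of_reductive_rank_general n m α hred
end

section
/- Let ℓ = (ℓ₁, ..., ℓₙ) ∈ ℤⁿ and A ∈ GL_n(ℤ). Define h : SU(2) × Tⁿ → SU(2) × Tⁿ by h(u, φ) = (R(ℓ·φ)·u, A·φ) where φ ∈ Tⁿ = ℝⁿ/ℤⁿ, ℓ·φ ∈ ℝ/ℤ is well-defined, R(θ) = diag(e^{2πiθ}, e^{−2πiθ}) ∈ SU(2), and A·φ denotes the induced action of A on Tⁿ. Then h is a homeomorphism, and for any g ∈ SU(2) of the form g = R(θ₀) and ψ ∈ Tⁿ, h conjugates the left translation by (R(θ₀), ψ) to the left translation by (R(θ₀ + ℓ·ψ), A·ψ): namely h ∘ L_{(R(θ₀),ψ)} = L_{(R(θ₀+ℓ·ψ), A·ψ)} ∘ h. -/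
open Matrix ComplexConjugate

/-- `SU(2)`, realized as the subgroup of the unitary group `U(2)` of matrices of
determinant `1`. -/
noncomputable def SU2 : Subgroup (Matrix.unitaryGroup (Fin 2) ℂ) where
  carrier := {A | (A : Matrix (Fin 2) (Fin 2) ℂ).det = 1}
  one_mem' := by simp
  mul_mem' := by
    intro a b ha hb
    simp only [Set.mem_setOf_eq] at *
    rw [Submonoid.coe_mul, Matrix.det_mul, ha, hb, one_mul]
  inv_mem' := by
    intro a ha
    simp only [Set.mem_setOf_eq] at *
    have h1 : ((a⁻¹ * a : Matrix.unitaryGroup (Fin 2) ℂ) : Matrix (Fin 2) (Fin 2) ℂ) = 1 := by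
      rw [inv_mul_cancel]; rfl
    have := congrArg Matrix.det h1
    rw [Submonoid.coe_mul, Matrix.det_mul, ha, mul_one, Matrix.det_one] at this
    exact this

/-- The diagonal matrix `R(θ) = diag (z, z̄)` as an element of `SU(2)`, for `z` on the
unit circle (multiplicative model of `ℝ/ℤ`). -/
noncomputable def Rdiag (z : Circle) : SU2 :=
  ⟨⟨Matrix.diagonal ![(z : ℂ), conj (z : ℂ)], by
      rw [Matrix.mem_unitaryGroup_iff, Matrix.star_eq_conjTranspose,
        Matrix.diagonal_conjTranspose, Matrix.diagonal_mul_diagonal]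
      have hv : (fun i => ![(z : ℂ), conj (z : ℂ)] i * star ![(z : ℂ), conj (z : ℂ)] i)
          = fun _ => (1 : ℂ) := by
        funext i
        fin_cases i <;> simp [Complex.mul_conj, mul_comm]
      rw [hv]
      exact Matrix.diagonal_one⟩,
    by
      show (Matrix.diagonal ![(z : ℂ), conj (z : ℂ)]).det = 1
      rw [Matrix.det_diagonal]
      simp [Fin.prod_univ_two, Complex.mul_conj]⟩

/-! The map `h` is the skew product `(u, φ) ↦ (χ φ * u, T φ)` of the continuous character
`χ = R ∘ (φ ↦ ℓ·φ)` of `Tⁿ` with the automorphism `T` of `Tⁿ` induced by `A`; `T` is invertible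
because `A⁻¹` is again an integer matrix. A skew product conjugates left translation by `(g, ψ)`
to left translation by `(g * χ ψ, T ψ)` as soon as `g` commutes with the image of `χ`, and
`R(θ₀)` commutes with every `R(θ)` since diagonal matrices commute. -/

lemma Finset.prod_zpow_eq_zpow_sum {ι G : Type*} [CommGroup G] (s : Finset ι) (f : ι → ℤ)
    (a : G) : ∏ i ∈ s, a ^ f i = a ^ ∑ i ∈ s, f i :=
  cons_induction (by simp) (fun _ _ _ _ ↦ by simp [prod_cons, sum_cons, _root_.zpow_add, *]) s

namespace Pi

variable {ι G : Type*} [Fintype ι] [CommGroup G]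

def prodZPowHom (ℓ : ι → ℤ) : (ι → G) →* G where
  toFun φ := ∏ j, φ j ^ ℓ j
  map_one' := by simp
  map_mul' φ ψ := by simp only [Pi.mul_apply, mul_zpow, Finset.prod_mul_distrib]

lemma continuous_prodZPowHom [TopologicalSpace G] [IsTopologicalGroup G] (ℓ : ι → ℤ) :
    Continuous (prodZPowHom ℓ : (ι → G) → G) :=
  continuous_finsetProd _ fun j _ => (continuous_apply j).zpow _

end Pi

namespace Matrix

variable {m n p G : Type*} [Fintype n] [CommGroup G]

def prodZPowHom (A : Matrix m n ℤ) : (n → G) →* (m → G) :=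
  MonoidHom.pi fun i => Pi.prodZPowHom (A i)

@[simp]
lemma prodZPowHom_apply (A : Matrix m n ℤ) (φ : n → G) (i : m) :
    prodZPowHom A φ i = ∏ j, φ j ^ A i j := rfl

lemma prodZPowHom_mul [Fintype p] (A : Matrix m n ℤ) (B : Matrix n p ℤ) :
    prodZPowHom (A * B) = (prodZPowHom A).comp (prodZPowHom B : (p → G) →* (n → G)) := by
  refine MonoidHom.ext fun φ => funext fun i => ?_
  calc ∏ k, φ k ^ ∑ j, A i j * B j k
      = ∏ j, ∏ k, φ k ^ (A i j * B j k) := by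
        simp only [← Finset.prod_zpow_eq_zpow_sum]
        exact Finset.prod_comm
    _ = ∏ j, (∏ k, φ k ^ B j k) ^ A i j := by
        simp only [_root_.zpow_mul', Finset.prod_zpow]

lemma prodZPowHom_one [DecidableEq n] :
    prodZPowHom (1 : Matrix n n ℤ) = MonoidHom.id (n → G) := by
  refine MonoidHom.ext fun φ => funext fun i => ?_
  simp [one_apply]

lemma continuous_prodZPowHom [TopologicalSpace G] [IsTopologicalGroup G] (A : Matrix m n ℤ) :
    Continuous (prodZPowHom A : (n → G) → (m → G)) :=
  continuous_pi fun i => Pi.continuous_prodZPowHom (A i)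

variable [DecidableEq n] [TopologicalSpace G] [IsTopologicalGroup G]

noncomputable def prodZPowEquiv (A : Matrix n n ℤ) (hA : IsUnit A.det) : (n → G) ≃ₜ* (n → G) where
  toFun := prodZPowHom A
  invFun := prodZPowHom A⁻¹
  left_inv φ := by
    rw [← MonoidHom.comp_apply, ← prodZPowHom_mul, nonsing_inv_mul A hA, prodZPowHom_one]
    rfl
  right_inv φ := by
    rw [← MonoidHom.comp_apply, ← prodZPowHom_mul, mul_nonsing_inv A hA, prodZPowHom_one]
    rfl
  map_mul' := map_mul _
  continuous_toFun := continuous_prodZPowHom A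
  continuous_invFun := continuous_prodZPowHom A⁻¹

end Matrix

namespace Homeomorph

variable {H K : Type*} [Group H] [TopologicalSpace H] [IsTopologicalGroup H] [TopologicalSpace K]

def skewProduct (χ : C(K, H)) (T : K ≃ₜ K) : H × K ≃ₜ H × K where
  toFun p := (χ p.2 * p.1, T p.2)
  invFun p := ((χ (T.symm p.2))⁻¹ * p.1, T.symm p.2)
  left_inv p := by simp
  right_inv p := by simp
  continuous_toFun := by fun_prop
  continuous_invFun := by fun_prop

lemma skewProduct_mul [Group K] (χ : K →ₜ* H) (T : K ≃ₜ* K) {g : H}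
    (hg : ∀ k, Commute g (χ k)) (ψ : K) (p : H × K) :
    skewProduct χ T ((g, ψ) * p) = (g * χ ψ, T ψ) * skewProduct χ T p := by
  refine Prod.ext ?_ (map_mul T ψ p.2)
  change χ (ψ * p.2) * (g * p.1) = g * χ ψ * (χ p.2 * p.1)
  rw [map_mul, mul_assoc, mul_assoc, ← (hg p.2).left_comm, ← (hg ψ).left_comm]

end Homeomorph

noncomputable def rdiagHom : Circle →ₜ* SU2 where
  toFun := Rdiag
  map_one' := by
    ext i j : 3
    fin_cases i <;> fin_cases j <;> simp [Rdiag]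
  map_mul' a b := by
    ext i j : 3
    fin_cases i <;> fin_cases j <;> simp [Rdiag]
  continuous_toFun := by
    unfold Rdiag
    fun_prop

/-- Sufficiency (case `+1`) of the topologically conjugate classification on
`SU(2) × Tⁿ`: for `ℓ ∈ ℤⁿ` and `A ∈ GL_n(ℤ)`, the map
`h (u, φ) = (R(ℓ·φ)·u, A·φ)` is a homeomorphism of `SU(2) × Tⁿ` conjugating the left
translation by `(R(θ₀), ψ)` to the left translation by `(R(θ₀ + ℓ·ψ), A·ψ)`
(written multiplicatively on the circle). -/
theorem su2_torus_translations_conjugate_plus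
    (n : ℕ) (ℓ : Fin n → ℤ) (A : Matrix (Fin n) (Fin n) ℤ) (hA : IsUnit A.det)
    (θ₀ : Circle) (ψ : Fin n → Circle) :
    ∃ h : (SU2 × (Fin n → Circle)) ≃ₜ (SU2 × (Fin n → Circle)),
      (∀ (u : SU2) (φ : Fin n → Circle),
        h (u, φ) = (Rdiag (∏ j, φ j ^ ℓ j) * u, fun i => ∏ j, φ j ^ A i j)) ∧
      ∀ p : SU2 × (Fin n → Circle),
        h ((Rdiag θ₀, ψ) * p)
          = (Rdiag (θ₀ * ∏ j, ψ j ^ ℓ j), fun i => ∏ j, ψ j ^ A i j) * h p := by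
  let χ : (Fin n → Circle) →ₜ* SU2 :=
    rdiagHom.comp ⟨Pi.prodZPowHom ℓ, Pi.continuous_prodZPowHom ℓ⟩
  let T : (Fin n → Circle) ≃ₜ* (Fin n → Circle) := Matrix.prodZPowEquiv A hA
  refine ⟨.skewProduct χ T, fun u φ => rfl, fun p => ?_⟩
  rw [Homeomorph.skewProduct_mul χ T (g := Rdiag θ₀) fun _ => (Commute.all _ _).map rdiagHom]
  exact congrArg (· * _) (Prod.ext (map_mul rdiagHom θ₀ _).symm rfl)
end

section
/- Let A ∈ GL_n(ℤ) and ℓ ∈ ℤⁿ. Define h : SU(2) × Tⁿ → SU(2) × Tⁿ by h(u, φ) = (R(ℓ·φ)·c(u), A·φ), where c(u) denotes entrywise complex conjugation of u ∈ SU(2) and R(θ) = diag(e^{2πiθ}, e^{−2πiθ}). Then h is a homeomorphism, and for g = (R(θ₀), ψ) with θ₀ ∈ ℝ/ℤ and ψ ∈ Tⁿ, h satisfies h ∘ L_g = L_{g'} ∘ h where g' = (R(−θ₀ + ℓ·ψ), A·ψ). -/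
open Matrix ComplexConjugate

/-- Entrywise complex conjugation, as a self-map of `SU(2)`. -/
noncomputable def SU2conj (u : SU2) : SU2 :=
  ⟨⟨((u : Matrix.unitaryGroup (Fin 2) ℂ) : Matrix (Fin 2) (Fin 2) ℂ).map (starRingEnd ℂ), by
      have hmem := u.1.2.2
      rw [Matrix.star_eq_conjTranspose] at hmem
      rw [Matrix.mem_unitaryGroup_iff, Matrix.star_eq_conjTranspose,
        ← Matrix.conjTranspose_map (starRingEnd ℂ) (fun x => rfl),
        ← Matrix.map_mul, hmem]
      simp⟩,
    by
      have hdet : ((u : Matrix.unitaryGroup (Fin 2) ℂ) : Matrix (Fin 2) (Fin 2) ℂ).det = 1 :=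
        u.2
      show (((u : Matrix.unitaryGroup (Fin 2) ℂ) : Matrix (Fin 2) (Fin 2) ℂ).map
          (starRingEnd ℂ)).det = 1
      have h2 := (RingHom.map_det (starRingEnd ℂ)
        ((u : Matrix.unitaryGroup (Fin 2) ℂ) : Matrix (Fin 2) (Fin 2) ℂ)).symm
      rw [RingHom.mapMatrix_apply] at h2
      rw [h2, hdet, _root_.map_one]⟩

section Aux

open Matrix ComplexConjugate

variable {n : ℕ}

/-- The underlying matrix of an element of `SU2`. -/
noncomputable def SU2toMat (u : SU2) : Matrix (Fin 2) (Fin 2) ℂ :=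
  ((u : Matrix.unitaryGroup (Fin 2) ℂ) : Matrix (Fin 2) (Fin 2) ℂ)

lemma SU2ext {u v : SU2} (h : SU2toMat u = SU2toMat v) : u = v :=
  Subtype.ext (Subtype.ext h)

lemma SU2toMat_mul (u v : SU2) : SU2toMat (u*v) = SU2toMat u * SU2toMat v := rfl

lemma SU2toMat_one : SU2toMat (1 : SU2) = 1 := rfl

lemma toMat_Rdiag (z : Circle) :
    SU2toMat (Rdiag z) = Matrix.diagonal ![(z : ℂ), conj (z : ℂ)] := rfl

lemma toMat_SU2conj (u : SU2) : SU2toMat (SU2conj u) = (SU2toMat u).map (starRingEnd ℂ) := rfl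

lemma Rdiag_mul (z w : Circle) : Rdiag (z * w) = Rdiag z * Rdiag w := by
  apply SU2ext
  rw [SU2toMat_mul, toMat_Rdiag, toMat_Rdiag, toMat_Rdiag]
  ext i j
  fin_cases i <;> fin_cases j <;>
    simp [Matrix.mul_apply, Matrix.diagonal, Fin.sum_univ_two]

lemma Rdiag_one : Rdiag 1 = 1 := by
  apply SU2ext
  rw [toMat_Rdiag, SU2toMat_one]
  have h : ![(1 : ℂ), conj (1 : ℂ)] = fun _ => (1 : ℂ) := by
    funext i; fin_cases i <;> simp
  rw [show ((1 : Circle) : ℂ) = (1 : ℂ) from rfl, h, Matrix.diagonal_one]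

lemma SU2conj_mul (u v : SU2) : SU2conj (u * v) = SU2conj u * SU2conj v := by
  apply SU2ext
  simp only [SU2toMat_mul, toMat_SU2conj, Matrix.map_mul]

lemma SU2conj_SU2conj (u : SU2) : SU2conj (SU2conj u) = u := by
  apply SU2ext
  rw [toMat_SU2conj, toMat_SU2conj]
  ext i j
  simp [Matrix.map_apply]

lemma SU2conj_Rdiag (z : Circle) : SU2conj (Rdiag z) = Rdiag z⁻¹ := by
  apply SU2ext
  have hz : ((z⁻¹ : Circle) : ℂ) = conj (z : ℂ) := Circle.coe_inv_eq_conj z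
  have hz' : ((z : ℂ))⁻¹ = conj (z : ℂ) := by rw [← Circle.coe_inv]; exact hz
  rw [toMat_SU2conj, toMat_Rdiag, toMat_Rdiag]
  ext i j
  fin_cases i <;> fin_cases j <;>
    simp [Matrix.diagonal, Matrix.map_apply, hz, hz']

lemma Rdiag_inv (z : Circle) : Rdiag z⁻¹ = (Rdiag z)⁻¹ := by
  rw [eq_inv_iff_mul_eq_one, ← Rdiag_mul, inv_mul_cancel, Rdiag_one]

lemma Rdiag_shift (a b c : Circle) (u : SU2) :
    Rdiag (a * b) * (Rdiag c * u) = Rdiag (c * a) * (Rdiag b * u) := by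
  rw [← mul_assoc, ← mul_assoc, ← Rdiag_mul, ← Rdiag_mul]
  congr 2
  exact (mul_rotate c a b).symm

/-- The torus endomorphism induced by an integer matrix. -/
noncomputable def Tm (B : Matrix (Fin n) (Fin n) ℤ) (φ : Fin n → Circle) : Fin n → Circle :=
  fun i => ∏ j, φ j ^ B i j

lemma prod_zpow_sum {G : Type*} [CommGroup G] {ι : Type*} (s : Finset ι) (a : G) (f : ι → ℤ) :
    ∏ j ∈ s, a ^ f j = a ^ ∑ j ∈ s, f j := by
  induction s using Finset.cons_induction with
  | empty => simp
  | cons i s hi ih => rw [Finset.prod_cons, Finset.sum_cons, ih, ← _root_.zpow_add]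

lemma Tm_comp (A B : Matrix (Fin n) (Fin n) ℤ) (φ : Fin n → Circle) :
    Tm A (Tm B φ) = Tm (A * B) φ := by
  funext i
  simp only [Tm, Matrix.mul_apply]
  have h1 : ∀ j ∈ Finset.univ, (∏ k, φ k ^ B j k) ^ A i j = ∏ k, φ k ^ (A i j * B j k) := by
    intro j _
    rw [← Finset.prod_zpow]
    exact Finset.prod_congr rfl fun k _ => by rw [← _root_.zpow_mul, mul_comm (B j k)]
  rw [Finset.prod_congr rfl h1, Finset.prod_comm]
  exact Finset.prod_congr rfl fun k _ => prod_zpow_sum _ _ _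

lemma Tm_one (φ : Fin n → Circle) : Tm (1 : Matrix (Fin n) (Fin n) ℤ) φ = φ := by
  funext i
  simp only [Tm, Matrix.one_apply]
  rw [Finset.prod_eq_single i]
  · simp
  · intro b _ hb
    rw [if_neg (fun h => hb h.symm), zpow_zero]
  · simp

lemma Tm_mul (A : Matrix (Fin n) (Fin n) ℤ) (ψ φ : Fin n → Circle) :
    Tm A (ψ * φ) = Tm A ψ * Tm A φ := by
  funext i
  simp [Tm, mul_zpow, Finset.prod_mul_distrib]

end Aux

section Cont

open Matrix ComplexConjugate

variable {n : ℕ} {X : Type*} [TopologicalSpace X]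

lemma continuous_SU2_toMat : Continuous SU2toMat :=
  continuous_subtype_val.comp continuous_subtype_val

lemma continuous_SU2_of {f : X → SU2} (h : Continuous fun x => SU2toMat (f x)) :
    Continuous f :=
  (h.subtype_mk _).subtype_mk _

lemma continuous_circle_coe : Continuous (fun z : Circle => (z : ℂ)) :=
  continuous_subtype_val

lemma continuous_Rdiag : Continuous Rdiag := by
  apply continuous_SU2_of
  apply continuous_matrix
  intro i j
  simp only [toMat_Rdiag]
  fin_cases i <;> fin_cases j <;>
    simp only [Matrix.diagonal, Matrix.of_apply, Matrix.cons_val', Matrix.cons_val_zero,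
      Matrix.cons_val_one, Matrix.head_cons, Matrix.empty_val', Matrix.cons_val_fin_one,
      Fin.isValue, if_true, if_false, reduceIte] <;>
    first
      | exact continuous_const
      | exact continuous_circle_coe
      | exact Complex.continuous_conj.comp continuous_circle_coe

lemma continuous_SU2conj : Continuous SU2conj := by
  apply continuous_SU2_of
  apply continuous_matrix
  intro i j
  simp only [toMat_SU2conj, Matrix.map_apply]
  exact Complex.continuous_conj.comp
    ((continuous_apply j).comp ((continuous_apply i).comp continuous_SU2_toMat))

lemma continuous_SU2_mul : Continuous fun p : SU2 × SU2 => p.1 * p.2 := by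
  apply continuous_SU2_of
  simp only [SU2toMat_mul]
  exact (continuous_SU2_toMat.comp continuous_fst).matrix_mul
    (continuous_SU2_toMat.comp continuous_snd)

lemma continuous_Tm (B : Matrix (Fin n) (Fin n) ℤ) : Continuous (Tm B) := by
  apply continuous_pi
  intro i
  exact continuous_finset_prod _ fun j _ => (continuous_apply j).zpow _

lemma continuous_Pm (ℓ : Fin n → ℤ) :
    Continuous fun φ : Fin n → Circle => ∏ j, φ j ^ ℓ j :=
  continuous_finset_prod _ fun j _ => (continuous_apply j).zpow _

end Cont


/-- Sufficiency (case `−1`) of the topologically conjugate classification on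
`SU(2) × Tⁿ`: for `ℓ ∈ ℤⁿ` and `A ∈ GL_n(ℤ)`, the map
`h (u, φ) = (R(ℓ·φ)·c(u), A·φ)`, with `c` entrywise complex conjugation, is a
homeomorphism of `SU(2) × Tⁿ` conjugating the left translation by `g = (R(θ₀), ψ)` to
the left translation by `g' = (R(−θ₀ + ℓ·ψ), A·ψ)` (written multiplicatively on the
circle). -/
theorem su2_torus_translations_conjugate_minus
    (n : ℕ) (ℓ : Fin n → ℤ) (A : Matrix (Fin n) (Fin n) ℤ) (hA : IsUnit A.det)
    (θ₀ : Circle) (ψ : Fin n → Circle) :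
    ∃ h : (SU2 × (Fin n → Circle)) ≃ₜ (SU2 × (Fin n → Circle)),
      (∀ (u : SU2) (φ : Fin n → Circle),
        h (u, φ) = (Rdiag (∏ j, φ j ^ ℓ j) * SU2conj u, fun i => ∏ j, φ j ^ A i j)) ∧
      ∀ p : SU2 × (Fin n → Circle),
        h ((Rdiag θ₀, ψ) * p)
          = (Rdiag (θ₀⁻¹ * ∏ j, ψ j ^ ℓ j), fun i => ∏ j, ψ j ^ A i j) * h p := by
  classical
  have hinv : Invertible A := A.invertibleOfIsUnitDet hA
  let B : Matrix (Fin n) (Fin n) ℤ := ⅟A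
  have hBA : ∀ φ : Fin n → Circle, Tm B (Tm A φ) = φ := by
    intro φ
    rw [Tm_comp, invOf_mul_self, Tm_one]
  have hAB : ∀ φ : Fin n → Circle, Tm A (Tm B φ) = φ := by
    intro φ
    rw [Tm_comp, mul_invOf_self, Tm_one]
  let F : SU2 × (Fin n → Circle) → SU2 × (Fin n → Circle) :=
    fun p => (Rdiag (∏ j, p.2 j ^ ℓ j) * SU2conj p.1, Tm A p.2)
  let G : SU2 × (Fin n → Circle) → SU2 × (Fin n → Circle) :=
    fun q => (SU2conj (Rdiag (∏ j, (Tm B q.2) j ^ ℓ j)⁻¹ * q.1), Tm B q.2)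
  have hGF : Function.LeftInverse G F := by
    rintro ⟨u, φ⟩
    show (SU2conj (Rdiag (∏ j, (Tm B (Tm A φ)) j ^ ℓ j)⁻¹ *
        (Rdiag (∏ j, φ j ^ ℓ j) * SU2conj u)), Tm B (Tm A φ)) = (u, φ)
    rw [hBA]
    rw [Rdiag_inv, inv_mul_cancel_left, SU2conj_SU2conj]
  have hFG : Function.RightInverse G F := by
    rintro ⟨v, χ⟩
    show (Rdiag (∏ j, (Tm B χ) j ^ ℓ j) *
        SU2conj (SU2conj (Rdiag (∏ j, (Tm B χ) j ^ ℓ j)⁻¹ * v)), Tm A (Tm B χ)) = (v, χ)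
    rw [hAB, SU2conj_SU2conj, Rdiag_inv, mul_inv_cancel_left]
  have hFcont : Continuous F := by
    refine Continuous.prodMk ?_ ((continuous_Tm A).comp continuous_snd)
    exact continuous_SU2_mul.comp
      (((continuous_Rdiag.comp ((continuous_Pm ℓ).comp continuous_snd))).prodMk
        (continuous_SU2conj.comp continuous_fst))
  have hGcont : Continuous G := by
    refine Continuous.prodMk ?_ ((continuous_Tm B).comp continuous_snd)
    refine continuous_SU2conj.comp (continuous_SU2_mul.comp (Continuous.prodMk ?_ continuous_fst))
    exact continuous_Rdiag.comp
      ((continuous_Pm ℓ).comp ((continuous_Tm B).comp continuous_snd)).inv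
  refine ⟨⟨⟨F, G, hGF, hFG⟩, hFcont, hGcont⟩, fun u φ => rfl, ?_⟩
  rintro ⟨u, φ⟩
  show F (Rdiag θ₀ * u, ψ * φ) =
    (Rdiag (θ₀⁻¹ * ∏ j, ψ j ^ ℓ j) * (F (u, φ)).1,
      (fun i => ∏ j, ψ j ^ A i j) * (F (u, φ)).2)
  have hsnd : Tm A (ψ * φ) = (fun i => ∏ j, ψ j ^ A i j) * Tm A φ := Tm_mul A ψ φ
  have hPm : (∏ j, (ψ * φ) j ^ ℓ j) = (∏ j, ψ j ^ ℓ j) * ∏ j, φ j ^ ℓ j := by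
    simp [mul_zpow, Finset.prod_mul_distrib]
  refine Prod.ext ?_ hsnd
  show Rdiag (∏ j, (ψ * φ) j ^ ℓ j) * SU2conj (Rdiag θ₀ * u)
      = Rdiag (θ₀⁻¹ * ∏ j, ψ j ^ ℓ j) * (Rdiag (∏ j, φ j ^ ℓ j) * SU2conj u)
  rw [hPm, SU2conj_mul, SU2conj_Rdiag]
  exact Rdiag_shift _ _ _ _
end
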